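/- Let p be a prime, n ≥ 1, and R a commutative ring such that for every maximal ideal 𝔭 of R the residue field R/𝔭 has characteristic p. Then the assignment 𝔭 ↦ ker(W_n(R) → R → R/𝔭), where the first map is the zeroth-component ring homomorphism and the second is the quotient map, is a bijection between the maximal ideals of R and the maximal ideals of W_n(R). In particular, every maximal ideal of W_n(R) is of this form for a unique maximal ideal 𝔭 of R. -/

import Mathlib

/-!
The zeroth-component map `W_n(R) → R` is surjective, so pulling back along it sends maximal
ideals to maximal ideals, and this is a bijection as soon as its kernel lies in the Jacobson
radical of `W_n(R)`. The hypothesis puts `p` in the Jacobson radical of `R`. The kernel is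
filtered by the kernels of `W_{m+1}(R) → W_m(R)`, consisting of truncations of `Vᵐ x`, so it
suffices that `1 + Vᵐ x` is a unit in `W_{m+1}(R)` for `m ≥ 1`. As `Vᵐ x * Vᵐ y = Vᵐ (pᵐ x y)`,
an inverse `1 + Vᵐ y` only needs `x₀ + y₀ + pᵐ x₀ y₀ = 0`, which is solvable because
`1 + pᵐ x₀` is a unit.
-/

namespace TruncatedWittVector

variable {p : ℕ} [Fact p.Prime] {n : ℕ} {R : Type*} [CommRing R]

/-- The zeroth component `(a₀, …, a_{n-1}) ↦ a₀` of a truncated Witt vector of positive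
length, as a ring homomorphism. -/
noncomputable def zeroth (hn : 1 ≤ n) :
    TruncatedWittVector p n R →+* R :=
  RingHom.liftOfRightInverse (WittVector.truncate n) out truncateFun_out
    ⟨WittVector.constantCoeff, by
      intro x hx
      rw [WittVector.mem_ker_truncate] at hx
      rw [RingHom.mem_ker, WittVector.constantCoeff_apply, hx 0 hn]⟩

/-- `zeroth` is indeed the zeroth-component map `(a₀, …, a_{n-1}) ↦ a₀`. -/
theorem zeroth_coeff (hn : 1 ≤ n) (x : TruncatedWittVector p n R) :
    zeroth hn x = x.coeff ⟨0, hn⟩ := by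
  obtain ⟨y, rfl⟩ := WittVector.truncate_surjective p n R x
  have h1 : zeroth (p := p) hn (WittVector.truncate n y) = WittVector.constantCoeff y :=
    RingHom.liftOfRightInverse_comp_apply _ _ _ _ y
  rw [h1, WittVector.coeff_truncate, WittVector.constantCoeff_apply]

end TruncatedWittVector

open Function RingHom Ideal

theorem Ideal.ker_comp_le_jacobson_bot {R S T : Type*} [CommRing R] [CommRing S] [CommRing T]
    {f : R →+* S} {g : S →+* T} (hf : Surjective f) (hf_ker : ker f ≤ jacobson ⊥)
    (hg_ker : ker g ≤ jacobson ⊥) : ker (g.comp f) ≤ jacobson ⊥ :=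
  calc ker (g.comp f) = (ker g).comap f := (comap_ker g f).symm
    _ ≤ (jacobson ⊥).comap f := comap_mono hg_ker
    _ = jacobson (ker f) := by rw [comap_jacobson_of_surjective hf, ← ker_eq_comap_bot]
    _ ≤ jacobson ⊥ := by simpa only [jacobson_idem] using jacobson_mono hf_ker

theorem Ideal.existsUnique_isMaximal_eq_comap {R S : Type*} [CommRing R] [CommRing S]
    {f : R →+* S} (hf : Surjective f) (hf_ker : ker f ≤ jacobson ⊥) (M : Ideal R)
    [M.IsMaximal] : ∃! P : Ideal S, P.IsMaximal ∧ M = P.comap f := by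
  have hM : ker f ≤ M := hf_ker.trans (sInf_le ⟨bot_le, ‹_›⟩)
  refine ⟨M.map f, ⟨IsMaximal.map_of_surjective_of_ker_le hf hM, ?_⟩, ?_⟩
  · rw [comap_map_of_surjective' f hf, sup_of_le_left hM]
  · rintro P ⟨-, rfl⟩
    exact (map_comap_of_surjective f hf P).symm

theorem Ideal.natCast_mem_jacobson_bot {R : Type*} [CommRing R] (p : ℕ)
    (hchar : ∀ 𝔭 : Ideal R, 𝔭.IsMaximal → CharP (R ⧸ 𝔭) p) : (p : R) ∈ jacobson ⊥ :=
  mem_sInf.mpr fun 𝔭 ⟨_, h𝔭⟩ ↦ by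
    have := hchar 𝔭 h𝔭
    rw [← Quotient.eq_zero_iff_mem, map_natCast, CharP.cast_eq_zero]

namespace WittVector

variable {p : ℕ} [Fact p.Prime] {R : Type*} [CommRing R]

local notation "𝕎" => WittVector p

theorem iterate_frobenius_iterate_verschiebung (x : 𝕎 R) (n : ℕ) :
    frobenius^[n] (verschiebung^[n] x) = x * p ^ n := by
  induction n generalizing x with
  | zero => simp
  | succ n ih =>
    rw [iterate_succ_apply', iterate_succ_apply, ih, map_mul, map_pow, map_natCast,
      frobenius_verschiebung, pow_succ', mul_assoc]

theorem iterate_verschiebung_mul_iterate_verschiebung (x y : 𝕎 R) (n : ℕ) :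
    verschiebung^[n] x * verschiebung^[n] y = verschiebung^[n] (x * y * (p : 𝕎 R) ^ n) := by
  rw [iterate_verschiebung_mul_left, iterate_frobenius_iterate_verschiebung, mul_assoc]

theorem truncate_iterate_verschiebung_eq_zero {n : ℕ} {x : 𝕎 R} (hx : x.coeff 0 = 0) :
    truncate (n + 1) (verschiebung^[n] x) = 0 := by
  rw [← RingHom.mem_ker, mem_ker_truncate]
  intro i hi
  obtain hi | rfl := (Nat.lt_succ_iff.mp hi).lt_or_eq
  · exact iterate_verschiebung_coeff_eq_zero x hi
  · simpa [hx] using iterate_verschiebung_coeff x i 0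

theorem isUnit_truncate_one_add_iterate_verschiebung (hp : (p : R) ∈ jacobson ⊥) {n : ℕ}
    (hn : n ≠ 0) (x : 𝕎 R) : IsUnit (truncate (n + 1) (1 + verschiebung^[n] x)) := by
  obtain ⟨c, hc⟩ := (mem_jacobson_bot.mp (pow_mem_of_mem _ hp n (Nat.pos_of_ne_zero hn))
    (x.coeff 0)).exists_left_inv
  set y : 𝕎 R := teichmuller p (-x.coeff 0 * c)
  have hxy : (x + y + x * y * (p : 𝕎 R) ^ n).coeff 0 = 0 := by
    rw [← constantCoeff_apply, map_add, map_add, map_mul, map_mul, map_pow, map_natCast]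
    simp only [constantCoeff_apply, y, teichmuller_coeff_zero]
    linear_combination (-x.coeff 0) * hc
  have hprod : (1 + verschiebung^[n] x) * (1 + verschiebung^[n] y)
      = 1 + verschiebung^[n] (x + y + x * y * (p : 𝕎 R) ^ n) := by
    rw [iterate_map_add, iterate_map_add, ← iterate_verschiebung_mul_iterate_verschiebung]
    ring
  refine .of_mul_eq_one (truncate (n + 1) (1 + verschiebung^[n] y)) ?_
  rw [← map_mul, hprod, map_add, truncate_iterate_verschiebung_eq_zero hxy, add_zero, map_one]

end WittVector

namespace TruncatedWittVector

variable {p : ℕ} [Fact p.Prime] {R : Type*} [CommRing R]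

theorem ker_truncate_succ_le_jacobson (hp : (p : R) ∈ jacobson ⊥) {n : ℕ} (hn : n ≠ 0) :
    ker (truncate (p := p) (R := R) n.le_succ) ≤ jacobson ⊥ := by
  intro k hk
  refine mem_jacobson_bot.mpr fun z ↦ ?_
  obtain ⟨y, hy⟩ := WittVector.truncate_surjective p (n + 1) R (k * z)
  have hy0 : ∀ i < n, y.coeff i = 0 := by
    rw [← WittVector.mem_ker_truncate, mem_ker, ← truncate_wittVector_truncate n.le_succ, hy,
      map_mul, mem_ker.mp hk, zero_mul]
  rw [← hy, WittVector.eq_iterate_verschiebung hy0, add_comm, ← map_one (WittVector.truncate _),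
    ← map_add]
  exact WittVector.isUnit_truncate_one_add_iterate_verschiebung hp hn _

theorem zeroth_comp_truncate {n m : ℕ} (hn : 1 ≤ n) (hm : n ≤ m) :
    (zeroth hn).comp (truncate hm) = zeroth (p := p) (R := R) (hn.trans hm) := by
  ext x
  simp only [RingHom.comp_apply, zeroth_coeff, coeff_truncate]
  rfl

theorem zeroth_surjective {n : ℕ} (hn : 1 ≤ n) : Surjective (zeroth (p := p) (R := R) hn) :=
  fun a ↦ ⟨mk p fun _ ↦ a, by rw [zeroth_coeff, coeff_mk]⟩

theorem ker_zeroth_le_jacobson (hp : (p : R) ∈ jacobson ⊥) {n : ℕ} (hn : 1 ≤ n) :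
    ker (zeroth (p := p) (R := R) hn) ≤ jacobson ⊥ := by
  induction n, hn using Nat.le_induction with
  | base =>
    intro x hx
    have hx0 : x = 0 := ext fun i ↦ by
      rw [Subsingleton.elim i ⟨0, Nat.one_pos⟩, ← zeroth_coeff, mem_ker.mp hx, coeff_zero]
    exact hx0 ▸ zero_mem _
  | succ n hn ih =>
    rw [← zeroth_comp_truncate hn n.le_succ]
    exact ker_comp_le_jacobson_bot (truncate_surjective _)
      (ker_truncate_succ_le_jacobson hp (by omega)) ih

end TruncatedWittVector

theorem stmt_1 (p : ℕ) [Fact p.Prime] (n : ℕ) (hn : 1 ≤ n) (R : Type*) [CommRing R]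
    (hchar : ∀ 𝔭 : Ideal R, 𝔭.IsMaximal → CharP (R ⧸ 𝔭) p) :
    (∀ 𝔭 : Ideal R, 𝔭.IsMaximal →
      (RingHom.ker ((Ideal.Quotient.mk 𝔭).comp (TruncatedWittVector.zeroth (p := p) hn))).IsMaximal) ∧
    (∀ 𝔐 : Ideal (TruncatedWittVector p n R), 𝔐.IsMaximal →
      ∃! 𝔭 : Ideal R, 𝔭.IsMaximal ∧
        𝔐 = RingHom.ker ((Ideal.Quotient.mk 𝔭).comp (TruncatedWittVector.zeroth (p := p) hn))) := by
  have hsurj := TruncatedWittVector.zeroth_surjective (p := p) (R := R) hn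
  have hker := TruncatedWittVector.ker_zeroth_le_jacobson (natCast_mem_jacobson_bot p hchar) hn
  simp only [← comap_ker, mk_ker]
  exact ⟨fun 𝔭 _ ↦ comap_isMaximal_of_surjective _ hsurj,
    fun 𝔐 _ ↦ existsUnique_isMaximal_eq_comap hsurj hker 𝔐⟩
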